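/- As |z| → ∞ with x = y = 0 fixed, the channel gain ζ(0,0,z) multiplied by 4π z²/A converges to 1; i.e., ζ(0,0,z) ~ A/(4π z²), matching the far-field gain formula at broadside (φ = 0). -/

import Mathlib

open Real Finset

/-- `g_i(α) = √A/2 + (-1)^i α`. -/
noncomputable def gfun (A : ℝ) (i : ℕ) (α : ℝ) : ℝ := Real.sqrt A / 2 + (-1 : ℝ) ^ i * α

/-- The exact near-field channel gain (Eq. (1)). -/
noncomputable def zeta (A x y z : ℝ) : ℝ :=
  (1 / (12 * Real.pi)) *
    ∑ i ∈ Finset.range 2, ∑ j ∈ Finset.range 2,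
      (gfun A i x * gfun A j y * |z|) /
        (((gfun A j y) ^ 2 + z ^ 2) *
          Real.sqrt ((gfun A i x) ^ 2 + (gfun A j y) ^ 2 + z ^ 2)) +
  (1 / (6 * Real.pi)) *
    ∑ i ∈ Finset.range 2, ∑ j ∈ Finset.range 2,
      Real.arctan ((gfun A i x * gfun A j y) /
        (|z| * Real.sqrt ((gfun A i x) ^ 2 + (gfun A j y) ^ 2 + z ^ 2)))

open Filter Topology

/-! At `x = y = 0` the four corner terms of `ζ` coincide, leaving one rational term and one
arctangent term, both of order `1/z²`. Writing `ζ · 4πz²/A` through `t = |z|`, the rational term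
contributes `(1/3) · t²/(A/4 + t²) · t/√(A/2 + t²) → 1/3`, and since `arctan u ~ u` as `u → 0`,
the arctangent term contributes `(2/3) · (arctan u / u) · t/√(A/2 + t²) → 2/3`
with `u = (A/4)/(t √(A/2 + t²))`. -/

theorem tendsto_sq_div_const_add_sq_atTop (c : ℝ) :
    Tendsto (fun t : ℝ => t ^ 2 / (c + t ^ 2)) atTop (𝓝 1) := by
  have hden : Tendsto (fun t : ℝ => c + t ^ 2) atTop atTop :=
    tendsto_atTop_add_const_left _ _ (tendsto_pow_atTop two_ne_zero)
  have hsmall : Tendsto (fun t : ℝ => 1 - c / (c + t ^ 2)) atTop (𝓝 (1 - 0)) :=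
    tendsto_const_nhds.sub (tendsto_const_nhds.div_atTop hden)
  rw [sub_zero] at hsmall
  refine hsmall.congr' ?_
  filter_upwards [hden.eventually_gt_atTop 0] with t ht
  field_simp
  ring

theorem tendsto_div_sqrt_const_add_sq_atTop (c : ℝ) :
    Tendsto (fun t : ℝ => t / √(c + t ^ 2)) atTop (𝓝 1) := by
  have h := (continuous_sqrt.tendsto 1).comp (tendsto_sq_div_const_add_sq_atTop c)
  rw [sqrt_one] at h
  refine h.congr' ?_
  filter_upwards [eventually_ge_atTop 0] with t ht
  simp [sqrt_div (sq_nonneg t), sqrt_sq ht]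

theorem tendsto_arctan_div_self : Tendsto (fun x : ℝ => arctan x / x) (𝓝[≠] 0) (𝓝 1) := by
  have h := (hasDerivAt_arctan 0).tendsto_slope_zero
  simpa [div_eq_inv_mul] using h

theorem tendsto_const_div_nhdsNE_zero {α : Type*} {l : Filter α} {g : α → ℝ} {b : ℝ} (hb : b ≠ 0)
    (hg : Tendsto g l atTop) : Tendsto (fun x => b / g x) l (𝓝[≠] 0) :=
  tendsto_nhdsWithin_iff.2 ⟨tendsto_const_nhds.div_atTop hg,
    (hg.eventually_gt_atTop 0).mono fun _ hx => div_ne_zero hb hx.ne'⟩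

theorem zeta_zero_zero {A : ℝ} (hA : 0 ≤ A) (z : ℝ) :
    zeta A 0 0 z = (A / 4 * |z| / ((A / 4 + z ^ 2) * √(A / 2 + z ^ 2))) / (3 * π) +
      2 * arctan (A / 4 / (|z| * √(A / 2 + z ^ 2))) / (3 * π) := by
  have hsq : (√A / 2) ^ 2 = A / 4 := by rw [div_pow, sq_sqrt hA]; norm_num
  have hmul : √A / 2 * (√A / 2) = A / 4 := by rw [← sq, hsq]
  have hsum : A / 4 + A / 4 + z ^ 2 = A / 2 + z ^ 2 := by ring
  simp only [zeta, gfun, sum_range_succ, sum_range_zero, mul_zero, add_zero, zero_add, hmul, hsq,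
    hsum]
  ring

theorem zeta_zero_zero_mul_eq {A z : ℝ} (hA : 0 < A) (hz : z ≠ 0) :
    zeta A 0 0 z * (4 * π * z ^ 2 / A) =
      (|z| ^ 2 / (A / 4 + |z| ^ 2) +
          2 * (arctan (A / 4 / (|z| * √(A / 2 + |z| ^ 2))) /
            (A / 4 / (|z| * √(A / 2 + |z| ^ 2))))) *
        (|z| / √(A / 2 + |z| ^ 2)) / 3 := by
  have hs : 0 < √(A / 2 + |z| ^ 2) := sqrt_pos.2 (by positivity)
  have hz' : 0 < |z| := abs_pos.2 hz
  rw [zeta_zero_zero hA.le, ← sq_abs z]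
  field_simp

/-- As `|z| → ∞`, `ζ(0,0,z) · 4πz²/A → 1`, matching the far-field broadside gain. -/
theorem stmt_7 (A : ℝ) (hA : 0 < A) :
    Filter.Tendsto (fun z : ℝ => zeta A 0 0 z * (4 * Real.pi * z ^ 2 / A))
      (Filter.comap (fun z : ℝ => |z|) Filter.atTop) (nhds 1) := by
  have hden : Tendsto (fun t : ℝ => t * √(A / 2 + t ^ 2)) atTop atTop :=
    tendsto_id.atTop_mul_atTop₀ (tendsto_sqrt_atTop.comp
      (tendsto_atTop_add_const_left _ _ (tendsto_pow_atTop two_ne_zero)))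
  have harctan := tendsto_arctan_div_self.comp
    (tendsto_const_div_nhdsNE_zero (b := A / 4) (by positivity) hden)
  have hlim := (((tendsto_sq_div_const_add_sq_atTop (A / 4)).add (harctan.const_mul 2)).mul
    (tendsto_div_sqrt_const_add_sq_atTop (A / 2))).div_const 3
  rw [show (1 : ℝ) = (1 + 2 * 1) * 1 / 3 by norm_num]
  refine (hlim.comp tendsto_comap).congr' ?_
  filter_upwards [tendsto_comap.eventually (eventually_gt_atTop 0)] with z hz
  exact (zeta_zero_zero_mul_eq hA (abs_pos.1 hz)).symm
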